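/- arXiv:0901.0319 — 4 statements merged into one kernel-verified Lean document; each statement's English description precedes it below -/
import Mathlib

section
/- Let A be a Lie-Rinehart algebra over R and ∇ : L × A → A a connection on A. Then: (i) the basic curvature R^bas_∇(α,β)(X) is alternating in (α,β) and R-linear in each of the arguments α, β and X (it is a tensor); (ii) the anchor intertwines the two basic connections: ρ(∇^bas_α β) = ∇^bas_α(ρ(β)) for all α,β ∈ A; (iii) the curvature of the basic A-connection ∇^bas on A satisfies R_{∇^bas}(α,β)(γ) = −R^bas_∇(α,β)(ρ(γ)) for all α,β,γ ∈ A; (iv) the curvature of the basic A-connection ∇^bas on L satisfies R_{∇^bas}(α,β)(X) = −ρ(R^bas_∇(α,β)(X)) for all α,β ∈ A and X ∈ L. -/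
/-! Basic algebraic model: Lie-Rinehart algebras over a commutative `ℝ`-algebra `R`,
`A`-connections, and raw Koszul/wedge operations on forms. -/

section LieRinehartBasics

variable (R : Type) [CommRing R] [Algebra ℝ R]
variable (A : Type) [AddCommGroup A] [Module R A]

/-- A Lie-Rinehart algebra over the commutative `ℝ`-algebra `R`: an `R`-module `A` with an
`ℝ`-bilinear Lie bracket and an `R`-linear anchor `ρ : A → Der_ℝ(R)` preserving brackets
and satisfying the Leibniz rule. -/
structure LieRinehart where
  bracket : A → A → A
  anchor : A →ₗ[R] Derivation ℝ R R
  bracket_add_left : ∀ x y z : A, bracket (x + y) z = bracket x z + bracket y z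
  bracket_add_right : ∀ x y z : A, bracket x (y + z) = bracket x y + bracket x z
  bracket_skew : ∀ x y : A, bracket x y = - bracket y x
  bracket_jacobi : ∀ x y z : A,
    bracket x (bracket y z) = bracket (bracket x y) z + bracket y (bracket x z)
  bracket_leibniz : ∀ (f : R) (x y : A),
    bracket x (f • y) = f • bracket x y + (anchor x f) • y
  anchor_bracket : ∀ (x y : A) (f : R),
    anchor (bracket x y) f = anchor x (anchor y f) - anchor y (anchor x f)

variable {R A}

/-- An `A`-connection on the `R`-module `E`. -/
structure AConn (LR : LieRinehart R A) (E : Type) [AddCommGroup E] [Module R E] where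
  conn : A → E → E
  conn_add_left : ∀ x y s, conn (x + y) s = conn x s + conn y s
  conn_smul_left : ∀ (f : R) x s, conn (f • x) s = f • conn x s
  conn_add_right : ∀ x s t, conn x (s + t) = conn x s + conn x t
  conn_leibniz : ∀ x (f : R) s, conn x (f • s) = f • conn x s + (LR.anchor x f) • s

/-- The curvature of an `A`-connection. -/
def AConn.curv {LR : LieRinehart R A} {E : Type} [AddCommGroup E] [Module R E]
    (C : AConn LR E) (x y : A) (s : E) : E :=
  C.conn x (C.conn y s) - C.conn y (C.conn x s) - C.conn (LR.bracket x y) s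

/-- The raw Koszul operator sending a `p`-form (an arbitrary function on `p`-tuples)
to a `(p+1)`-form, for an operation `nab` ("connection") and a bracket `br`:
`(dω)(α₀,…,α_p) = Σᵢ (-1)ⁱ nab_{αᵢ}(ω(…,α̂ᵢ,…)) + Σ_{i<j} (-1)^{i+j} ω(br(αᵢ,αⱼ),…,α̂ᵢ,…,α̂ⱼ,…)`. -/
def koszulRaw {E : Type} [AddCommGroup E] (nab : A → E → E) (br : A → A → A)
    (p : ℕ) (ω : (Fin p → A) → E) : (Fin (p + 1) → A) → E := fun α =>
  (∑ i : Fin (p + 1), (-1 : ℤ) ^ (i : ℕ) • nab (α i) (ω (fun k => α (i.succAbove k))))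
  + ∑ i : Fin (p + 1), ∑ j : Fin (p + 1),
      if (i : ℕ) < (j : ℕ) then
        (-1 : ℤ) ^ ((i : ℕ) + (j : ℕ)) • ω (fun k : Fin p =>
          if (k : ℕ) = 0 then br (α i) (α j)
          else α ⟨if (k : ℕ) - 1 < (i : ℕ) then (k : ℕ) - 1
                  else if (k : ℕ) < (j : ℕ) then (k : ℕ) else (k : ℕ) + 1,
                by have hk := k.isLt; split_ifs <;> omega⟩)
      else 0

/-- `(p,q)`-shuffles: permutations of `Fin (p+q)` which are strictly increasing on the
first `p` and on the last `q` positions. -/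
def IsShuffle (p q : ℕ) (σ : Equiv.Perm (Fin (p + q))) : Prop :=
  (∀ i j : Fin (p + q), i < j → (j : ℕ) < p → σ i < σ j) ∧
  (∀ i j : Fin (p + q), i < j → p ≤ (i : ℕ) → σ i < σ j)

open scoped Classical in
/-- The raw shuffle wedge product of a scalar `p`-form with an `E`-valued `q`-form. -/
noncomputable def wedgeRaw {E : Type} [AddCommGroup E] [Module R E]
    (p q : ℕ) (ω : (Fin p → A) → R) (η : (Fin q → A) → E) : (Fin (p + q) → A) → E :=
  fun α => ∑ σ : Equiv.Perm (Fin (p + q)),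
    if IsShuffle p q σ then
      (Equiv.Perm.sign σ : ℤ) •
        (ω (fun i => α (σ (Fin.castAdd q i))) • η (fun j => α (σ (Fin.natAdd p j))))
    else 0

end LieRinehartBasics

section BasicConnections

variable {R : Type} [CommRing R] [Algebra ℝ R]
variable {A : Type} [AddCommGroup A] [Module R A]

variable (R A) in
/-- A connection `∇ : L × A → A` on `A`, where `L = Der_ℝ(R)` plays the role of vector
fields. -/
structure LConn where
  conn : Derivation ℝ R R → A → A
  conn_add_left : ∀ X Y a, conn (X + Y) a = conn X a + conn Y a
  conn_smul_left : ∀ (f : R) X a, conn (f • X) a = f • conn X a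
  conn_add_right : ∀ X a b, conn X (a + b) = conn X a + conn X b
  conn_leibniz : ∀ X (f : R) a, conn X (f • a) = f • conn X a + (X f) • a

/-- The basic `A`-connection on `A` induced by `∇`: `∇ᵇᵃˢ_a b = ∇_{ρ(b)} a + [a, b]`. -/
def basA (LR : LieRinehart R A) (N : LConn R A) (a b : A) : A :=
  N.conn (LR.anchor b) a + LR.bracket a b

/-- The basic `A`-connection on `L = Der_ℝ(R)` induced by `∇`:
`∇ᵇᵃˢ_a X = ρ(∇_X a) + [ρ(a), X]`. -/
def basL (LR : LieRinehart R A) (N : LConn R A) (a : A) (X : Derivation ℝ R R) :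
    Derivation ℝ R R :=
  LR.anchor (N.conn X a) + ⁅LR.anchor a, X⁆

/-- The basic curvature of `∇`:
`Rᵇᵃˢ(a,b)(X) = ∇_X [a,b] - [∇_X a, b] - [a, ∇_X b] - ∇_{∇ᵇᵃˢ_b X} a + ∇_{∇ᵇᵃˢ_a X} b`. -/
def basCurv (LR : LieRinehart R A) (N : LConn R A) (a b : A) (X : Derivation ℝ R R) : A :=
  N.conn X (LR.bracket a b) - LR.bracket (N.conn X a) b - LR.bracket a (N.conn X b)
    - N.conn (basL LR N b X) a + N.conn (basL LR N a X) b

end BasicConnections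

/-! All identities are verified by expanding the definitions. In each argument of `Rᵇᵃˢ`
the Leibniz defects of its five terms cancel (for `X`, the defect `ρ(α)(f) • X` of
`∇ᵇᵃˢ_α (f • X)` is what cancels against those of the brackets), and linearity in `β`
follows from linearity in `α` by skew-symmetry. Identity (iii) is then the Jacobi identity
of `A`, and (iv) is the Jacobi identity for derivations together with
`ρ [α, β] = [ρ α, ρ β]`. -/

namespace Derivation

variable {k S : Type*} [CommRing k] [CommRing S] [Algebra k S]

theorem commutator_smul_left (f : S) (D₁ D₂ : Derivation k S S) :
    ⁅f • D₁, D₂⁆ = f • ⁅D₁, D₂⁆ - D₂ f • D₁ := by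
  ext g
  simp only [commutator_apply, coe_smul, Pi.smul_apply, smul_eq_mul, leibniz, coe_sub,
    Pi.sub_apply]
  ring

theorem commutator_smul_right (f : S) (D₁ D₂ : Derivation k S S) :
    ⁅D₁, f • D₂⁆ = f • ⁅D₁, D₂⁆ + D₁ f • D₂ := by
  ext g
  simp [commutator_apply, smul_eq_mul]

end Derivation

variable {R : Type} [CommRing R] [Algebra ℝ R]
variable {A : Type} [AddCommGroup A] [Module R A]

namespace LieRinehart

variable (LR : LieRinehart R A)

theorem bracket_smul_left (f : R) (a b : A) :
    LR.bracket (f • a) b = f • LR.bracket a b - LR.anchor b f • a := by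
  rw [LR.bracket_skew, LR.bracket_leibniz, LR.bracket_skew b a]
  module

theorem anchor_map_bracket (a b : A) :
    LR.anchor (LR.bracket a b) = ⁅LR.anchor a, LR.anchor b⁆ := by
  ext f
  exact LR.anchor_bracket a b f

end LieRinehart

namespace LConn

variable (N : LConn R A)

theorem conn_zero_right (X : Derivation ℝ R R) : N.conn X 0 = 0 := by
  simpa using N.conn_add_right X 0 0

theorem conn_neg_right (X : Derivation ℝ R R) (a : A) : N.conn X (-a) = -N.conn X a := by
  refine eq_neg_of_add_eq_zero_left ?_
  rw [← N.conn_add_right, neg_add_cancel, conn_zero_right]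

theorem conn_sub_right (X : Derivation ℝ R R) (a b : A) :
    N.conn X (a - b) = N.conn X a - N.conn X b := by
  rw [sub_eq_add_neg, N.conn_add_right, conn_neg_right, sub_eq_add_neg]

end LConn

section BasicConnections

variable (LR : LieRinehart R A) (N : LConn R A)

theorem basL_apply (a : A) (X : Derivation ℝ R R) (f : R) :
    basL LR N a X f = LR.anchor (N.conn X a) f + (LR.anchor a (X f) - X (LR.anchor a f)) := by
  simp [basL, Derivation.commutator_apply]

theorem basL_add_left (a a' : A) (X : Derivation ℝ R R) :
    basL LR N (a + a') X = basL LR N a X + basL LR N a' X := by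
  simp only [basL, N.conn_add_right, map_add, add_lie]
  abel

theorem basL_smul_left (f : R) (a : A) (X : Derivation ℝ R R) :
    basL LR N (f • a) X = f • basL LR N a X := by
  simp only [basL, N.conn_leibniz, map_add, map_smul, Derivation.commutator_smul_left, smul_add]
  module

theorem basL_add_right (a : A) (X Y : Derivation ℝ R R) :
    basL LR N a (X + Y) = basL LR N a X + basL LR N a Y := by
  simp only [basL, N.conn_add_left, map_add, lie_add]
  abel

theorem basL_smul_right (f : R) (a : A) (X : Derivation ℝ R R) :
    basL LR N a (f • X) = f • basL LR N a X + LR.anchor a f • X := by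
  simp only [basL, N.conn_smul_left, map_smul, Derivation.commutator_smul_right, smul_add]
  module

theorem basCurv_swap (a b : A) (X : Derivation ℝ R R) :
    basCurv LR N a b X = -basCurv LR N b a X := by
  simp only [basCurv]
  rw [LR.bracket_skew b a, N.conn_neg_right, LR.bracket_skew (N.conn X b) a,
    LR.bracket_skew b (N.conn X a)]
  abel

theorem basCurv_add_left (a a' b : A) (X : Derivation ℝ R R) :
    basCurv LR N (a + a') b X = basCurv LR N a b X + basCurv LR N a' b X := by
  simp only [basCurv, LR.bracket_add_left, N.conn_add_right, basL_add_left, N.conn_add_left]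
  abel

theorem basCurv_smul_left (f : R) (a b : A) (X : Derivation ℝ R R) :
    basCurv LR N (f • a) b X = f • basCurv LR N a b X := by
  simp only [basCurv, N.conn_leibniz, LR.bracket_smul_left, N.conn_sub_right,
    LR.bracket_add_left, basL_smul_left, N.conn_smul_left, basL_apply]
  module

theorem basCurv_add_right (a b b' : A) (X : Derivation ℝ R R) :
    basCurv LR N a (b + b') X = basCurv LR N a b X + basCurv LR N a b' X := by
  rw [basCurv_swap, basCurv_add_left, basCurv_swap LR N b, basCurv_swap LR N b']
  abel

theorem basCurv_smul_right (f : R) (a b : A) (X : Derivation ℝ R R) :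
    basCurv LR N a (f • b) X = f • basCurv LR N a b X := by
  rw [basCurv_swap, basCurv_smul_left, basCurv_swap LR N b, smul_neg, neg_neg]

theorem basCurv_add_apply (a b : A) (X Y : Derivation ℝ R R) :
    basCurv LR N a b (X + Y) = basCurv LR N a b X + basCurv LR N a b Y := by
  simp only [basCurv, N.conn_add_left, basL_add_right, LR.bracket_add_left,
    LR.bracket_add_right]
  abel

theorem basCurv_smul_apply (f : R) (a b : A) (X : Derivation ℝ R R) :
    basCurv LR N a b (f • X) = f • basCurv LR N a b X := by
  simp only [basCurv, N.conn_smul_left, basL_smul_right, N.conn_add_left,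
    LR.bracket_smul_left, LR.bracket_leibniz]
  module

theorem anchor_basA (a b : A) : LR.anchor (basA LR N a b) = basL LR N a (LR.anchor b) := by
  simp only [basA, basL, map_add, LR.anchor_map_bracket]

theorem basA_curv_eq_neg_basCurv_anchor (a b c : A) :
    basA LR N a (basA LR N b c) - basA LR N b (basA LR N a c) - basA LR N (LR.bracket a b) c
      = -basCurv LR N a b (LR.anchor c) := by
  simp only [basA, basCurv, basL, map_add, LR.anchor_map_bracket, LR.bracket_add_right]
  rw [LR.bracket_jacobi a b c, LR.bracket_skew (N.conn (LR.anchor c) a) b]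
  abel

theorem basL_curv_eq_neg_anchor_basCurv (a b : A) (X : Derivation ℝ R R) :
    basL LR N a (basL LR N b X) - basL LR N b (basL LR N a X) - basL LR N (LR.bracket a b) X
      = -LR.anchor (basCurv LR N a b X) := by
  simp only [basL, basCurv, map_add, map_sub, LR.anchor_map_bracket, lie_add]
  rw [lie_lie, ← lie_skew (LR.anchor b) (LR.anchor (N.conn X a))]
  abel

end BasicConnections

/-- Properties of the basic connections and basic curvature of a
connection `∇` on a Lie-Rinehart algebra `A`: (i) the basic curvature is a tensor
(alternating in `(a,b)` and `R`-linear in each argument); (ii) the anchor intertwines the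
two basic connections; (iii) the curvature of `∇ᵇᵃˢ` on `A` is `-Rᵇᵃˢ ∘ ρ` ;
(iv) the curvature of `∇ᵇᵃˢ` on `L` is `-ρ ∘ Rᵇᵃˢ`. -/
theorem statement1
    {R : Type} [CommRing R] [Algebra ℝ R]
    {A : Type} [AddCommGroup A] [Module R A]
    (LR : LieRinehart R A) (N : LConn R A) :
    -- (i) the basic curvature is an alternating tensor
    (∀ (a b : A) (X : Derivation ℝ R R), basCurv LR N a b X = - basCurv LR N b a X)
    ∧ (∀ (a a' b : A) (X : Derivation ℝ R R),
        basCurv LR N (a + a') b X = basCurv LR N a b X + basCurv LR N a' b X)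
    ∧ (∀ (f : R) (a b : A) (X : Derivation ℝ R R),
        basCurv LR N (f • a) b X = f • basCurv LR N a b X)
    ∧ (∀ (a b b' : A) (X : Derivation ℝ R R),
        basCurv LR N a (b + b') X = basCurv LR N a b X + basCurv LR N a b' X)
    ∧ (∀ (f : R) (a b : A) (X : Derivation ℝ R R),
        basCurv LR N a (f • b) X = f • basCurv LR N a b X)
    ∧ (∀ (a b : A) (X Y : Derivation ℝ R R),
        basCurv LR N a b (X + Y) = basCurv LR N a b X + basCurv LR N a b Y)
    ∧ (∀ (f : R) (a b : A) (X : Derivation ℝ R R),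
        basCurv LR N a b (f • X) = f • basCurv LR N a b X)
    -- (ii) the anchor intertwines the two basic connections
    ∧ (∀ a b : A, LR.anchor (basA LR N a b) = basL LR N a (LR.anchor b))
    -- (iii) curvature of the basic connection on `A`
    ∧ (∀ a b c : A,
        basA LR N a (basA LR N b c) - basA LR N b (basA LR N a c)
            - basA LR N (LR.bracket a b) c
          = - basCurv LR N a b (LR.anchor c))
    -- (iv) curvature of the basic connection on `L`
    ∧ (∀ (a b : A) (X : Derivation ℝ R R),
        basL LR N a (basL LR N b X) - basL LR N b (basL LR N a X)
            - basL LR N (LR.bracket a b) X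
          = - LR.anchor (basCurv LR N a b X)) := by
  exact ⟨basCurv_swap LR N, basCurv_add_left LR N, basCurv_smul_left LR N,
    basCurv_add_right LR N, basCurv_smul_right LR N, basCurv_add_apply LR N,
    basCurv_smul_apply LR N, anchor_basA LR N, basA_curv_eq_neg_basCurv_anchor LR N,
    basL_curv_eq_neg_anchor_basCurv LR N⟩
end

section
/- Let A be a Lie-Rinehart algebra over R, let E and F be R-modules, ∂ : E → F an R-linear map, ∇ A-connections on E and on F with ∇_α∘∂ = ∂∘∇_α for all α ∈ A, and K : A × A → Hom_R(F,E) an alternating R-bilinear map such that (a) R_{∇^E}(α,β) = K(α,β)∘∂ and R_{∇^F}(α,β) = ∂∘K(α,β) for all α,β ∈ A, and (b) ∇_α(K(β,γ)) + ∇_β(K(γ,α)) + ∇_γ(K(α,β)) = K([α,β],γ) + K([β,γ],α) + K([γ,α],β) for all α,β,γ ∈ A, where ∇_α(T) := ∇^E_α∘T − T∘∇^F_α on Hom_R(F,E). Then: (i) g_∂ := Hom_R(F,E) with the bracket [S,T]_∂ := S∘∂∘T − T∘∂∘S is a Lie algebra over R; (ii) Ã := Hom_R(F,E) ⊕ A,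 with anchor ρ̃(T,α) := ρ(α) and bracket [(S,α),(T,β)] := ([S,T]_∂ + ∇_α(T) − ∇_β(S) + K(α,β), [α,β]), is a Lie-Rinehart algebra over R (in particular this bracket satisfies the Jacobi identity and the Leibniz rule with respect to ρ̃); (iii) the inclusion T ↦ (T,0) and the projection (T,α) ↦ α are morphisms, exhibiting Ã as an extension of A by the bundle of Lie algebras g_∂. -/
section Extension

variable {R : Type} [CommRing R] [Algebra ℝ R]
variable {A : Type} [AddCommGroup A] [Module R A]
variable {E F : Type} [AddCommGroup E] [Module R E] [AddCommGroup F] [Module R F]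

/-- The induced `A`-connection on `Hom_R(F, E)`:
`(∇_a T)(t) = ∇ᴱ_a (T t) - T (∇ᶠ_a t)`. -/
def connHom {LR : LieRinehart R A} (CE : AConn LR E) (CF : AConn LR F)
    (a : A) (T : F →ₗ[R] E) : F →ₗ[R] E where
  toFun t := CE.conn a (T t) - T (CF.conn a t)
  map_add' x y := by
    simp only [map_add, CE.conn_add_right, CF.conn_add_right]; abel
  map_smul' f t := by
    simp only [map_smul, RingHom.id_apply, CE.conn_leibniz, CF.conn_leibniz, map_add,
      smul_sub]
    abel

/-- The fibrewise Lie bracket `[S, T]_∂ = S∂T - T∂S` on `g_∂ = Hom_R(F, E)`. -/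
def brDel (del : E →ₗ[R] F) (S T : F →ₗ[R] E) : F →ₗ[R] E :=
  S.comp (del.comp T) - T.comp (del.comp S)

/-!
After expanding by bilinearity, the first component of the Jacobi identity of `Ã` splits by
degree in `Hom_R(F, E)`: the cubic part is the Jacobi identity of `[·,·]_∂`; the quadratic
part holds because `∇` commutes with `∂` and hence is a derivation of `[·,·]_∂`; the linear
part holds because, by (a), the curvature of the induced connection on `Hom_R(F, E)` is
`[K, ·]_∂`; and the part in `K` alone is the Bianchi identity (b).
-/

theorem AConn.conn_sub {LR : LieRinehart R A} {M : Type} [AddCommGroup M] [Module R M]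
    (C : AConn LR M) (x : A) (s t : M) : C.conn x (s - t) = C.conn x s - C.conn x t :=
  (AddMonoidHom.mk' (C.conn x) (C.conn_add_right x)).map_sub s t

theorem LieRinehart.bracket_zero_left (LR : LieRinehart R A) (x : A) : LR.bracket 0 x = 0 :=
  (AddMonoidHom.mk' (LR.bracket · x) (fun a b => LR.bracket_add_left a b x)).map_zero

section BracketDel

set_option linter.unusedSectionVars false

variable (del : E →ₗ[R] F)

@[simp] theorem brDel_apply (S T : F →ₗ[R] E) (t : F) :
    brDel del S T t = S (del (T t)) - T (del (S t)) := rfl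

theorem brDel_skew (S T : F →ₗ[R] E) : brDel del S T = - brDel del T S := by
  simp [brDel]

theorem brDel_add_left (S S' T : F →ₗ[R] E) :
    brDel del (S + S') T = brDel del S T + brDel del S' T := by
  ext; simp; abel

theorem brDel_sub_left (S S' T : F →ₗ[R] E) :
    brDel del (S - S') T = brDel del S T - brDel del S' T := by
  ext; simp; abel

theorem brDel_add_right (S T T' : F →ₗ[R] E) :
    brDel del S (T + T') = brDel del S T + brDel del S T' := by
  ext; simp; abel

theorem brDel_sub_right (S T T' : F →ₗ[R] E) :
    brDel del S (T - T') = brDel del S T - brDel del S T' := by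
  ext; simp; abel

theorem brDel_smul_left (f : R) (S T : F →ₗ[R] E) :
    brDel del (f • S) T = f • brDel del S T := by
  ext; simp [smul_sub]

theorem brDel_smul_right (f : R) (S T : F →ₗ[R] E) :
    brDel del S (f • T) = f • brDel del S T := by
  ext; simp [smul_sub]

theorem brDel_jacobi (S T U : F →ₗ[R] E) :
    brDel del S (brDel del T U) = brDel del (brDel del S T) U + brDel del T (brDel del S U) := by
  ext; simp; abel

end BracketDel

section ConnHom

variable {LR : LieRinehart R A} (CE : AConn LR E) (CF : AConn LR F)

@[simp] theorem connHom_apply (a : A) (T : F →ₗ[R] E) (t : F) :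
    connHom CE CF a T t = CE.conn a (T t) - T (CF.conn a t) := rfl

theorem connHom_add_left (a a' : A) (T : F →ₗ[R] E) :
    connHom CE CF (a + a') T = connHom CE CF a T + connHom CE CF a' T := by
  ext; simp [CE.conn_add_left, CF.conn_add_left]; abel

theorem connHom_zero_left (T : F →ₗ[R] E) : connHom CE CF 0 T = 0 :=
  (AddMonoidHom.mk' (connHom CE CF · T) (fun a a' => connHom_add_left CE CF a a' T)).map_zero

theorem connHom_smul_left (f : R) (a : A) (T : F →ₗ[R] E) :
    connHom CE CF (f • a) T = f • connHom CE CF a T := by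
  ext; simp [CE.conn_smul_left, CF.conn_smul_left, smul_sub]

theorem connHom_add_right (a : A) (T T' : F →ₗ[R] E) :
    connHom CE CF a (T + T') = connHom CE CF a T + connHom CE CF a T' := by
  ext; simp [CE.conn_add_right]; abel

theorem connHom_sub_right (a : A) (T T' : F →ₗ[R] E) :
    connHom CE CF a (T - T') = connHom CE CF a T - connHom CE CF a T' :=
  (AddMonoidHom.mk' (connHom CE CF a) (connHom_add_right CE CF a)).map_sub T T'

theorem connHom_neg_right (a : A) (T : F →ₗ[R] E) :
    connHom CE CF a (-T) = - connHom CE CF a T :=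
  (AddMonoidHom.mk' (connHom CE CF a) (connHom_add_right CE CF a)).map_neg T

theorem connHom_leibniz (a : A) (f : R) (T : F →ₗ[R] E) :
    connHom CE CF a (f • T) = f • connHom CE CF a T + LR.anchor a f • T := by
  ext; simp [CE.conn_leibniz, smul_sub]; abel

theorem connHom_brDel {del : E →ₗ[R] F}
    (hcompat : ∀ (a : A) (s : E), CF.conn a (del s) = del (CE.conn a s))
    (a : A) (S T : F →ₗ[R] E) :
    connHom CE CF a (brDel del S T)
      = brDel del (connHom CE CF a S) T + brDel del S (connHom CE CF a T) := by
  ext; simp [CE.conn_sub, hcompat]; abel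

theorem connHom_curv {del : E →ₗ[R] F} {K : A → A → (F →ₗ[R] E)}
    (hRE : ∀ (a b : A) (s : E), CE.curv a b s = K a b (del s))
    (hRF : ∀ (a b : A) (t : F), CF.curv a b t = del (K a b t))
    (a b : A) (T : F →ₗ[R] E) :
    connHom CE CF a (connHom CE CF b T)
      = connHom CE CF b (connHom CE CF a T) + connHom CE CF (LR.bracket a b) T
        + brDel del (K a b) T := by
  ext t
  have hE := hRE a b (T t)
  have hF := congrArg T (hRF a b t)
  simp only [AConn.curv, map_sub] at hE hF
  simp only [connHom_apply, brDel_apply, LinearMap.add_apply, CE.conn_sub]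
  linear_combination (norm := abel) hE - hF

end ConnHom

structure IsRepUpToHomotopy {LR : LieRinehart R A} (del : E →ₗ[R] F)
    (CE : AConn LR E) (CF : AConn LR F) (K : A → A → (F →ₗ[R] E)) : Prop where
  conn_del : ∀ (a : A) (s : E), CF.conn a (del s) = del (CE.conn a s)
  K_skew : ∀ a b, K a b = - K b a
  K_add_right : ∀ a b b', K a (b + b') = K a b + K a b'
  K_smul_right : ∀ (f : R) a b, K a (f • b) = f • K a b
  curv_E : ∀ (a b : A) (s : E), CE.curv a b s = K a b (del s)
  curv_F : ∀ (a b : A) (t : F), CF.curv a b t = del (K a b t)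
  bianchi : ∀ a b c : A,
    connHom CE CF a (K b c) + connHom CE CF b (K c a) + connHom CE CF c (K a b)
      = K (LR.bracket a b) c + K (LR.bracket b c) a + K (LR.bracket c a) b

def extBracket {LR : LieRinehart R A} (del : E →ₗ[R] F) (CE : AConn LR E) (CF : AConn LR F)
    (K : A → A → (F →ₗ[R] E)) (p q : (F →ₗ[R] E) × A) : (F →ₗ[R] E) × A :=
  (brDel del p.1 q.1 + connHom CE CF p.2 q.1 - connHom CE CF q.2 p.1 + K p.2 q.2,
    LR.bracket p.2 q.2)

namespace IsRepUpToHomotopy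

variable {LR : LieRinehart R A} {del : E →ₗ[R] F} {CE : AConn LR E} {CF : AConn LR F}
  {K : A → A → (F →ₗ[R] E)}

theorem K_add_left (h : IsRepUpToHomotopy del CE CF K) (a a' b : A) :
    K (a + a') b = K a b + K a' b := by
  rw [h.K_skew, h.K_add_right, neg_add, ← h.K_skew, ← h.K_skew]

theorem K_neg_right (h : IsRepUpToHomotopy del CE CF K) (a b : A) : K a (-b) = - K a b :=
  (AddMonoidHom.mk' (K a) (h.K_add_right a)).map_neg b

theorem K_zero_right (h : IsRepUpToHomotopy del CE CF K) (a : A) : K a 0 = 0 :=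
  (AddMonoidHom.mk' (K a) (h.K_add_right a)).map_zero

theorem bianchi_ordered (h : IsRepUpToHomotopy del CE CF K) (a b c : A) :
    connHom CE CF a (K b c) - connHom CE CF b (K a c) + connHom CE CF c (K a b)
      = K (LR.bracket a b) c - K a (LR.bracket b c) + K b (LR.bracket a c) := by
  have hB := h.bianchi a b c
  rw [h.K_skew c a, connHom_neg_right, h.K_skew (LR.bracket b c) a,
    h.K_skew (LR.bracket c a) b, LR.bracket_skew c a, h.K_neg_right] at hB
  linear_combination (norm := abel) hB

theorem extBracket_add_left (h : IsRepUpToHomotopy del CE CF K) (p p' q : (F →ₗ[R] E) × A) :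
    extBracket del CE CF K (p + p') q
      = extBracket del CE CF K p q + extBracket del CE CF K p' q := by
  refine Prod.ext ?_ (LR.bracket_add_left _ _ _)
  simp only [extBracket, Prod.fst_add, Prod.snd_add, brDel_add_left, connHom_add_left,
    connHom_add_right, h.K_add_left]
  abel

theorem extBracket_add_right (h : IsRepUpToHomotopy del CE CF K) (p q q' : (F →ₗ[R] E) × A) :
    extBracket del CE CF K p (q + q')
      = extBracket del CE CF K p q + extBracket del CE CF K p q' := by
  refine Prod.ext ?_ (LR.bracket_add_right _ _ _)
  simp only [extBracket, Prod.fst_add, Prod.snd_add, brDel_add_right, connHom_add_left,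
    connHom_add_right, h.K_add_right]
  abel

theorem extBracket_skew (h : IsRepUpToHomotopy del CE CF K) (p q : (F →ₗ[R] E) × A) :
    extBracket del CE CF K p q = - extBracket del CE CF K q p := by
  refine Prod.ext ?_ (LR.bracket_skew _ _)
  simp only [extBracket, Prod.fst_neg]
  rw [brDel_skew del p.1, h.K_skew p.2]
  abel

theorem extBracket_leibniz (h : IsRepUpToHomotopy del CE CF K) (f : R)
    (p q : (F →ₗ[R] E) × A) :
    extBracket del CE CF K p (f • q)
      = f • extBracket del CE CF K p q + LR.anchor p.2 f • q := by
  refine Prod.ext ?_ (LR.bracket_leibniz _ _ _)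
  simp only [extBracket, Prod.smul_fst, Prod.smul_snd, Prod.fst_add, brDel_smul_right,
    connHom_leibniz, connHom_smul_left, h.K_smul_right, smul_add, smul_sub]
  abel

theorem extBracket_jacobi_fst (h : IsRepUpToHomotopy del CE CF K) (S T U : F →ₗ[R] E)
    (a b c : A) :
    (extBracket del CE CF K (S, a) (extBracket del CE CF K (T, b) (U, c))).1
      = (extBracket del CE CF K (extBracket del CE CF K (S, a) (T, b)) (U, c)).1
        + (extBracket del CE CF K (T, b) (extBracket del CE CF K (S, a) (U, c))).1 := by
  simp only [extBracket, brDel_add_right, brDel_sub_right, brDel_add_left, brDel_sub_left,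
    connHom_add_right, connHom_sub_right]
  linear_combination (norm := abel) brDel_jacobi del S T U
    + connHom_brDel CE CF h.conn_del a T U - connHom_brDel CE CF h.conn_del b S U
    + connHom_brDel CE CF h.conn_del c S T
    + connHom_curv CE CF h.curv_E h.curv_F a b U - connHom_curv CE CF h.curv_E h.curv_F a c T
    + connHom_curv CE CF h.curv_E h.curv_F b c S
    + h.bianchi_ordered a b c
    + brDel_skew del T (connHom CE CF c S) + brDel_skew del S (K b c)
    - brDel_skew del T (K a c)

theorem extBracket_jacobi (h : IsRepUpToHomotopy del CE CF K) (p q r : (F →ₗ[R] E) × A) :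
    extBracket del CE CF K p (extBracket del CE CF K q r)
      = extBracket del CE CF K (extBracket del CE CF K p q) r
        + extBracket del CE CF K q (extBracket del CE CF K p r) :=
  Prod.ext (h.extBracket_jacobi_fst p.1 q.1 r.1 p.2 q.2 r.2) (LR.bracket_jacobi _ _ _)

theorem extBracket_inl (h : IsRepUpToHomotopy del CE CF K) (S T : F →ₗ[R] E) :
    extBracket del CE CF K (S, 0) (T, 0) = (brDel del S T, 0) := by
  simp [extBracket, connHom_zero_left, h.K_zero_right, LR.bracket_zero_left]

def extension (h : IsRepUpToHomotopy del CE CF K) : LieRinehart R ((F →ₗ[R] E) × A) where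
  bracket := extBracket del CE CF K
  anchor := LR.anchor ∘ₗ LinearMap.snd R (F →ₗ[R] E) A
  bracket_add_left := h.extBracket_add_left
  bracket_add_right := h.extBracket_add_right
  bracket_skew := h.extBracket_skew
  bracket_jacobi := h.extBracket_jacobi
  bracket_leibniz := h.extBracket_leibniz
  anchor_bracket p q := LR.anchor_bracket p.2 q.2

end IsRepUpToHomotopy

theorem statement5_general
    (LR : LieRinehart R A) (del : E →ₗ[R] F)
    (CE : AConn LR E) (CF : AConn LR F)
    (hcompat : ∀ (a : A) (s : E), CF.conn a (del s) = del (CE.conn a s))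
    (K : A → A → (F →ₗ[R] E))
    (hK_skew : ∀ a b, K a b = - K b a)
    (hK_add_right : ∀ a b b', K a (b + b') = K a b + K a b')
    (hK_smul_right : ∀ (f : R) a b, K a (f • b) = f • K a b)
    (hRE : ∀ (a b : A) (s : E), CE.curv a b s = K a b (del s))
    (hRF : ∀ (a b : A) (t : F), CF.curv a b t = del (K a b t))
    (hBianchi : ∀ a b c : A,
      connHom CE CF a (K b c) + connHom CE CF b (K c a) + connHom CE CF c (K a b)
        = K (LR.bracket a b) c + K (LR.bracket b c) a + K (LR.bracket c a) b) :
    -- (i) `g_∂` is a Lie algebra over `R`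
    ((∀ S T : F →ₗ[R] E, brDel del S T = - brDel del T S)
      ∧ (∀ S S' T : F →ₗ[R] E, brDel del (S + S') T = brDel del S T + brDel del S' T)
      ∧ (∀ (f : R) (S T : F →ₗ[R] E), brDel del (f • S) T = f • brDel del S T)
      ∧ (∀ (f : R) (S T : F →ₗ[R] E), brDel del S (f • T) = f • brDel del S T)
      ∧ (∀ S T U : F →ₗ[R] E,
          brDel del S (brDel del T U)
            = brDel del (brDel del S T) U + brDel del T (brDel del S U)))
    -- (ii) `Ã = Hom_R(F,E) ⊕ A` is a Lie-Rinehart algebra with the stated structure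
    ∧ (∃ LRt : LieRinehart R ((F →ₗ[R] E) × A),
        (∀ p q : (F →ₗ[R] E) × A,
          LRt.bracket p q
            = (brDel del p.1 q.1 + connHom CE CF p.2 q.1 - connHom CE CF q.2 p.1
                + K p.2 q.2, LR.bracket p.2 q.2))
        ∧ (∀ p : (F →ₗ[R] E) × A, LRt.anchor p = LR.anchor p.2)
        -- (iii) inclusion and projection are morphisms
        ∧ (∀ S T : F →ₗ[R] E, LRt.bracket (S, 0) (T, 0) = (brDel del S T, 0))
        ∧ (∀ p q : (F →ₗ[R] E) × A,
            (LRt.bracket p q).2 = LR.bracket p.2 q.2)) := by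
  have h : IsRepUpToHomotopy del CE CF K :=
    ⟨hcompat, hK_skew, hK_add_right, hK_smul_right, hRE, hRF, hBianchi⟩
  exact ⟨⟨brDel_skew del, brDel_add_left del, brDel_smul_left del, brDel_smul_right del,
      brDel_jacobi del⟩,
    h.extension, fun _ _ => rfl, fun _ => rfl, h.extBracket_inl, fun _ _ => rfl⟩

/-- Given a representation up to homotopy of length one
`(E, F, ∂, ∇, K)` of a Lie-Rinehart algebra `A`, one obtains an extension of
Lie-Rinehart algebras `g_∂ → Ã → A`: (i) `g_∂ = Hom_R(F,E)` with `[S,T]_∂ = S∂T - T∂S`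
is a Lie algebra over `R`; (ii) `Ã = Hom_R(F,E) ⊕ A` with the stated anchor and bracket
is a Lie-Rinehart algebra over `R`; (iii) the inclusion and projection are morphisms. -/
theorem statement5
    (LR : LieRinehart R A) (del : E →ₗ[R] F)
    (CE : AConn LR E) (CF : AConn LR F)
    (hcompat : ∀ (a : A) (s : E), CF.conn a (del s) = del (CE.conn a s))
    (K : A → A → (F →ₗ[R] E))
    (hK_skew : ∀ a b, K a b = - K b a)
    (hK_add_left : ∀ a a' b, K (a + a') b = K a b + K a' b)
    (hK_smul_left : ∀ (f : R) a b, K (f • a) b = f • K a b)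
    (hK_add_right : ∀ a b b', K a (b + b') = K a b + K a b')
    (hK_smul_right : ∀ (f : R) a b, K a (f • b) = f • K a b)
    (hRE : ∀ (a b : A) (s : E), CE.curv a b s = K a b (del s))
    (hRF : ∀ (a b : A) (t : F), CF.curv a b t = del (K a b t))
    (hBianchi : ∀ a b c : A,
      connHom CE CF a (K b c) + connHom CE CF b (K c a) + connHom CE CF c (K a b)
        = K (LR.bracket a b) c + K (LR.bracket b c) a + K (LR.bracket c a) b) :
    -- (i) `g_∂` is a Lie algebra over `R`
    ((∀ S T : F →ₗ[R] E, brDel del S T = - brDel del T S)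
      ∧ (∀ S S' T : F →ₗ[R] E, brDel del (S + S') T = brDel del S T + brDel del S' T)
      ∧ (∀ (f : R) (S T : F →ₗ[R] E), brDel del (f • S) T = f • brDel del S T)
      ∧ (∀ (f : R) (S T : F →ₗ[R] E), brDel del S (f • T) = f • brDel del S T)
      ∧ (∀ S T U : F →ₗ[R] E,
          brDel del S (brDel del T U)
            = brDel del (brDel del S T) U + brDel del T (brDel del S U)))
    -- (ii) `Ã = Hom_R(F,E) ⊕ A` is a Lie-Rinehart algebra with the stated structure
    ∧ (∃ LRt : LieRinehart R ((F →ₗ[R] E) × A),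
        (∀ p q : (F →ₗ[R] E) × A,
          LRt.bracket p q
            = (brDel del p.1 q.1 + connHom CE CF p.2 q.1 - connHom CE CF q.2 p.1
                + K p.2 q.2, LR.bracket p.2 q.2))
        ∧ (∀ p : (F →ₗ[R] E) × A, LRt.anchor p = LR.anchor p.2)
        -- (iii) inclusion and projection are morphisms
        ∧ (∀ S T : F →ₗ[R] E, LRt.bracket (S, 0) (T, 0) = (brDel del S T, 0))
        ∧ (∀ p q : (F →ₗ[R] E) × A,
            (LRt.bracket p q).2 = LR.bracket p.2 q.2)) :=
  statement5_general LR del CE CF hcompat K hK_skew hK_add_right hK_smul_right hRE hRF hBianchi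

end Extension
end

section
/- Let X be a topological space, let V^0,…,V^n and W^0,…,W^n be finite-dimensional real normed vector spaces, and for each i let ∂_i : X → L(V^i,V^{i+1}), δ_i : X → L(W^i,W^{i+1}) and f_i : X → L(V^i,W^i) be continuous maps (in operator norm) such that for every x ∈ X, ∂_{i+1}(x)∘∂_i(x) = 0, δ_{i+1}(x)∘δ_i(x) = 0, and δ_i(x)∘f_i(x) = f_{i+1}(x)∘∂_i(x). (i) If the complex (V^•,∂_•(x₀)) is exact at every degree, then there is a neighborhood U of x₀ such that (V^•,∂_•(x)) is exact at every degree for all x ∈ U. (ii) If f_•(x₀) is a quasi-isomorphism (induces isomorphisms ker/im → ker/im in every degree), then there is a neighborhood U of x₀ such that f_•(x) is a quasi-isomorphism for all x ∈ U. -/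
/-!
Since `range ∂ᵢ₋₁ ⊆ ker ∂ᵢ`, rank–nullity gives `rank ∂ᵢ₋₁ + rank ∂ᵢ ≤ dim Vⁱ`, with equality
exactly when the complex is exact at `Vⁱ`. Rank is lower semicontinuous, so equality at `x₀`
persists near `x₀`; injectivity of `∂₀` is an open condition as well, and since the complexes are
bounded only finitely many degrees are involved. For (ii), `f` is a quasi-isomorphism exactly when
its mapping cone `Vⁱ ⊕ Wⁱ⁻¹` is exact, and the cone is again a continuous bounded complex.
-/

section

variable (X : Type) [TopologicalSpace X] (n : ℕ)
variable (V W : ℕ → Type)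
variable [∀ i, NormedAddCommGroup (V i)] [∀ i, NormedSpace ℝ (V i)]
variable [∀ i, NormedAddCommGroup (W i)] [∀ i, NormedSpace ℝ (W i)]

/-- The pointwise complex `(V, ∂(x))` is exact at every degree (including injectivity
in degree `0`). -/
def IsExactEverywhere (dV : ∀ i, X → V i →L[ℝ] V (i + 1)) (x : X) : Prop :=
  (∀ v : V 0, dV 0 x v = 0 → v = 0) ∧
    ∀ (i : ℕ) (v : V (i + 1)), dV (i + 1) x v = 0 → ∃ u : V i, dV i x u = v

/-- The pointwise chain map `f(x) : (V, ∂(x)) → (W, δ(x))` is a quasi-isomorphism: the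
induced maps `ker/im → ker/im` are bijective in every degree. -/
def IsQuasiIsoAt (dV : ∀ i, X → V i →L[ℝ] V (i + 1)) (dW : ∀ i, X → W i →L[ℝ] W (i + 1))
    (f : ∀ i, X → V i →L[ℝ] W i) (x : X) : Prop :=
  (∀ v : V 0, dV 0 x v = 0 → f 0 x v = 0 → v = 0) ∧
  (∀ w : W 0, dW 0 x w = 0 → ∃ v : V 0, dV 0 x v = 0 ∧ f 0 x v = w) ∧
  (∀ (i : ℕ) (v : V (i + 1)), dV (i + 1) x v = 0 →
      (∃ w : W i, dW i x w = f (i + 1) x v) → ∃ u : V i, dV i x u = v) ∧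
  (∀ (i : ℕ) (w : W (i + 1)), dW (i + 1) x w = 0 →
      ∃ v : V (i + 1), dV (i + 1) x v = 0 ∧ ∃ w' : W i, dW i x w' = w - f (i + 1) x v)

end

open Filter Module Topology

section

variable {𝕜 E F G : Type*} [NontriviallyNormedField 𝕜]
  [NormedAddCommGroup E] [NormedSpace 𝕜 E] [NormedAddCommGroup F] [NormedSpace 𝕜 F]
  [NormedAddCommGroup G] [NormedSpace 𝕜 G]

theorem ContinuousLinearMap.eventually_finrank_range_le [CompleteSpace 𝕜]
    [FiniteDimensional 𝕜 E] (L₀ : E →L[𝕜] F) :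
    ∀ᶠ L : E →L[𝕜] F in 𝓝 L₀, finrank 𝕜 (LinearMap.range (L₀ : E →ₗ[𝕜] F)) ≤
      finrank 𝕜 (LinearMap.range (L : E →ₗ[𝕜] F)) := by
  have hopen := isOpen_setOfPred_nat_le_rank (𝕜 := 𝕜) (E := E) (F := F)
    (finrank 𝕜 (LinearMap.range (L₀ : E →ₗ[𝕜] F)))
  filter_upwards [hopen.mem_nhds (by simp [LinearMap.rank, finrank_eq_rank])] with L hL
  simpa [LinearMap.rank, ← finrank_eq_rank] using hL

theorem Continuous.clm_prod {X : Type*} [TopologicalSpace X] {A : X → E →L[𝕜] F}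
    {B : X → E →L[𝕜] G} (hA : Continuous A) (hB : Continuous B) :
    Continuous fun x => (A x).prod (B x) :=
  (ContinuousLinearMap.prodₗᵢ 𝕜).continuous.comp (hA.prodMk hB)

theorem LinearMap.range_eq_ker_of_finrank_le {K A B C : Type*} [DivisionRing K]
    [AddCommGroup A] [Module K A] [AddCommGroup B] [Module K B] [AddCommGroup C] [Module K C]
    [FiniteDimensional K B] {f : A →ₗ[K] B} {g : B →ₗ[K] C} (hfg : range f ≤ ker g)
    (hdim : finrank K B ≤ finrank K (range f) + finrank K (range g)) : range f = ker g :=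
  Submodule.eq_of_le_of_finrank_le hfg (by have := g.finrank_range_add_finrank_ker; omega)

theorem eventually_range_eq_ker [CompleteSpace 𝕜] {X : Type*} [TopologicalSpace X]
    [FiniteDimensional 𝕜 E] [FiniteDimensional 𝕜 F]
    {d : X → E →L[𝕜] F} {e : X → F →L[𝕜] G} (hd : Continuous d) (he : Continuous e)
    (hde : ∀ x v, e x (d x v) = 0) {x₀ : X}
    (h₀ : LinearMap.range (d x₀ : E →ₗ[𝕜] F) = LinearMap.ker (e x₀ : F →ₗ[𝕜] G)) :
    ∀ᶠ x in 𝓝 x₀,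
      LinearMap.range (d x : E →ₗ[𝕜] F) = LinearMap.ker (e x : F →ₗ[𝕜] G) := by
  filter_upwards [hd.continuousAt.eventually (d x₀).eventually_finrank_range_le,
    he.continuousAt.eventually (e x₀).eventually_finrank_range_le] with x hdx hex
  refine LinearMap.range_eq_ker_of_finrank_le ?_ ?_
  · rintro _ ⟨v, rfl⟩
    exact hde x v
  · have := (e x₀ : F →ₗ[𝕜] G).finrank_range_add_finrank_ker
    rw [← h₀] at this
    omega

end

section Exactness

variable {X : Type} {E : ℕ → Type}
  [∀ i, NormedAddCommGroup (E i)] [∀ i, NormedSpace ℝ (E i)] {d : ∀ i, X → E i →L[ℝ] E (i + 1)}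

theorem isExactEverywhere_iff {x : X} :
    IsExactEverywhere X E d x ↔ Function.Injective (d 0 x) ∧
      ∀ i, LinearMap.ker (d (i + 1) x : E (i + 1) →ₗ[ℝ] E (i + 2)) ≤
        LinearMap.range (d i x : E i →ₗ[ℝ] E (i + 1)) := by
  rw [injective_iff_map_eq_zero]
  rfl

theorem IsExactEverywhere.eventually [TopologicalSpace X] [∀ i, FiniteDimensional ℝ (E i)]
    {n : ℕ} (hbd : ∀ i, n < i → Subsingleton (E i)) (hc : ∀ i, Continuous (d i))
    (hdd : ∀ i x (v : E i), d (i + 1) x (d i x v) = 0) {x₀ : X}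
    (h : IsExactEverywhere X E d x₀) : ∀ᶠ x in 𝓝 x₀, IsExactEverywhere X E d x := by
  rw [isExactEverywhere_iff] at h
  have hinj : ∀ᶠ x in 𝓝 x₀, Function.Injective (d 0 x) :=
    (hc 0).continuousAt.eventually (ContinuousLinearMap.isOpen_injective.mem_nhds h.1)
  have hlow : ∀ᶠ x in 𝓝 x₀, ∀ i ∈ Set.Iio n, LinearMap.range (d i x : E i →ₗ[ℝ] E (i + 1)) =
      LinearMap.ker (d (i + 1) x : E (i + 1) →ₗ[ℝ] E (i + 2)) := by
    refine (eventually_all_finite (Set.finite_Iio n)).2 fun i _ => ?_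
    have hrange : LinearMap.range (d i x₀ : E i →ₗ[ℝ] E (i + 1)) ≤
        LinearMap.ker (d (i + 1) x₀ : E (i + 1) →ₗ[ℝ] E (i + 2)) := by
      rintro _ ⟨v, rfl⟩
      exact hdd i x₀ v
    exact eventually_range_eq_ker (hc i) (hc (i + 1)) (hdd i) (hrange.antisymm (h.2 i))
  filter_upwards [hinj, hlow] with x hinjx hlowx
  refine isExactEverywhere_iff.2 ⟨hinjx, fun i => ?_⟩
  rcases lt_or_ge i n with hi | hi
  · exact (hlowx i hi).ge
  · have := hbd (i + 1) (by omega)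
    intro v _
    exact ⟨0, Subsingleton.elim _ _⟩

end Exactness

noncomputable section MappingCone

variable {V W : ℕ → Type}

variable (W) in
/-- `W[-1]`, with `0` in degree `0`. -/
def Shift : ℕ → Type
  | 0 => PUnit
  | i + 1 => W i

variable (V W) in
abbrev MappingCone (i : ℕ) : Type := V i × Shift W i

theorem Shift.subsingleton {n : ℕ} (hW : ∀ i, n < i → Subsingleton (W i)) :
    ∀ i, n + 1 < i → Subsingleton (Shift W i)
  | 0, h => absurd h (by omega)
  | i + 1, h => hW i (by omega)

theorem MappingCone.subsingleton {n : ℕ} (hV : ∀ i, n < i → Subsingleton (V i))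
    (hW : ∀ i, n < i → Subsingleton (W i)) (i : ℕ) (hi : n + 1 < i) :
    Subsingleton (MappingCone V W i) :=
  have := hV i (by omega)
  have := Shift.subsingleton hW i hi
  inferInstance

variable [∀ i, NormedAddCommGroup (V i)] [∀ i, NormedSpace ℝ (V i)]
variable [∀ i, NormedAddCommGroup (W i)] [∀ i, NormedSpace ℝ (W i)]

instance : ∀ i, NormedAddCommGroup (Shift W i)
  | 0 => inferInstanceAs (NormedAddCommGroup PUnit)
  | i + 1 => inferInstanceAs (NormedAddCommGroup (W i))

instance : ∀ i, NormedSpace ℝ (Shift W i)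
  | 0 => inferInstanceAs (NormedSpace ℝ PUnit)
  | i + 1 => inferInstanceAs (NormedSpace ℝ (W i))

instance [∀ i, FiniteDimensional ℝ (W i)] : ∀ i, FiniteDimensional ℝ (Shift W i)
  | 0 => inferInstanceAs (FiniteDimensional ℝ PUnit)
  | i + 1 => inferInstanceAs (FiniteDimensional ℝ (W i))

variable {X : Type} (dV : ∀ i, X → V i →L[ℝ] V (i + 1)) (dW : ∀ i, X → W i →L[ℝ] W (i + 1))
  (f : ∀ i, X → V i →L[ℝ] W i)

/-- The differential `W[-1]^i → W[-1]^(i + 1) = W i`. -/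
def Shift.d : ∀ i, X → Shift W i →L[ℝ] W i
  | 0 => 0
  | i + 1 => dW i

def MappingCone.d (i : ℕ) (x : X) : MappingCone V W i →L[ℝ] MappingCone V W (i + 1) :=
  ((dV i x).comp (ContinuousLinearMap.fst ℝ _ _)).prod
    ((f i x).comp (ContinuousLinearMap.fst ℝ _ _) -
      (Shift.d dW i x).comp (ContinuousLinearMap.snd ℝ _ _))

variable {dV dW f}

theorem Shift.continuous_d [TopologicalSpace X] (hdW : ∀ i, Continuous (dW i)) :
    ∀ i, Continuous (Shift.d dW i)
  | 0 => continuous_const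
  | i + 1 => hdW i

theorem MappingCone.continuous_d [TopologicalSpace X] (hdV : ∀ i, Continuous (dV i))
    (hdW : ∀ i, Continuous (dW i)) (hf : ∀ i, Continuous (f i)) (i : ℕ) :
    Continuous (MappingCone.d dV dW f i) :=
  ((hdV i).clm_comp continuous_const).clm_prod
    (((hf i).clm_comp continuous_const).sub ((Shift.continuous_d hdW i).clm_comp continuous_const))

theorem Shift.d_d (hWdd : ∀ i x (w : W i), dW (i + 1) x (dW i x w) = 0) :
    ∀ i x (w : Shift W i), dW i x (Shift.d dW i x w) = 0
  | 0, x, _ => map_zero (dW 0 x)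
  | i + 1, x, w => hWdd i x w

theorem MappingCone.d_d (hVdd : ∀ i x (v : V i), dV (i + 1) x (dV i x v) = 0)
    (hWdd : ∀ i x (w : W i), dW (i + 1) x (dW i x w) = 0)
    (hchain : ∀ i x (v : V i), dW i x (f i x v) = f (i + 1) x (dV i x v))
    (i : ℕ) (x : X) (c : MappingCone V W i) :
    MappingCone.d dV dW f (i + 1) x (MappingCone.d dV dW f i x c) = 0 := by
  refine Prod.ext (hVdd i x c.1) ?_
  change f (i + 1) x (dV i x c.1) - dW i x (f i x c.1 - Shift.d dW i x c.2) = 0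
  rw [map_sub, hchain, Shift.d_d hWdd, sub_zero, sub_self]

theorem MappingCone.injective_zero_iff (x : X) :
    (∀ c : MappingCone V W 0, MappingCone.d dV dW f 0 x c = 0 → c = 0) ↔
      ∀ v : V 0, dV 0 x v = 0 → f 0 x v = 0 → v = 0 := by
  refine ⟨fun h v hv hfv => congrArg Prod.fst (h (v, 0) (Prod.ext hv ?_)), fun h c hc => ?_⟩
  · change f 0 x v - 0 = 0
    rw [hfv, sub_zero]
  · have hc₂ : f 0 x c.1 - 0 = 0 := congrArg Prod.snd hc
    exact Prod.ext (h c.1 (congrArg Prod.fst hc) (by rwa [sub_zero] at hc₂)) rfl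

theorem MappingCone.exact_succ_iff
    (hchain : ∀ i x (v : V i), dW i x (f i x v) = f (i + 1) x (dV i x v)) (i : ℕ) (x : X) :
    (∀ c : MappingCone V W (i + 1), MappingCone.d dV dW f (i + 1) x c = 0 →
        ∃ u, MappingCone.d dV dW f i x u = c) ↔
      (∀ v : V (i + 1), dV (i + 1) x v = 0 →
          (∃ w : W i, dW i x w = f (i + 1) x v) → ∃ u : V i, dV i x u = v) ∧
        ∀ w : W i, dW i x w = 0 →
          ∃ v : V i, dV i x v = 0 ∧ ∃ w' : Shift W i, Shift.d dW i x w' = w - f i x v := by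
  constructor
  · intro h
    refine ⟨fun v hv ⟨w, hw⟩ => ?_, fun w hw => ?_⟩
    · obtain ⟨u, hu⟩ := h (v, w) (Prod.ext hv (sub_eq_zero.2 hw.symm))
      exact ⟨u.1, congrArg Prod.fst hu⟩
    · obtain ⟨u, hu⟩ := h (0, w) (Prod.ext (map_zero (dV (i + 1) x))
        (show f (i + 1) x 0 - dW i x w = 0 by rw [map_zero, hw, sub_zero]))
      have hu₂ : f i x u.1 - Shift.d dW i x u.2 = w := congrArg Prod.snd hu
      refine ⟨u.1, congrArg Prod.fst hu, -u.2, ?_⟩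
      rw [map_neg, ← hu₂, sub_sub_cancel_left]
  · rintro ⟨hV, hW⟩ ⟨v, (w : W i)⟩ hc
    have hw : f (i + 1) x v - dW i x w = 0 := congrArg Prod.snd hc
    obtain ⟨u, rfl⟩ := hV v (congrArg Prod.fst hc) ⟨w, (sub_eq_zero.1 hw).symm⟩
    obtain ⟨v', hv', w', hw'⟩ := hW (w - f i x u)
      (by rw [map_sub, (sub_eq_zero.1 hw).symm, hchain, sub_self])
    refine ⟨(u + v', -w'), Prod.ext ?_ ?_⟩
    · change dV i x (u + v') = dV i x u
      rw [map_add, hv', add_zero]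
    · change f i x (u + v') - Shift.d dW i x (-w') = w
      rw [map_add, map_neg, sub_neg_eq_add, hw']
      abel

theorem MappingCone.isExactEverywhere_iff
    (hchain : ∀ i x (v : V i), dW i x (f i x v) = f (i + 1) x (dV i x v)) (x : X) :
    IsExactEverywhere X (MappingCone V W) (MappingCone.d dV dW f) x ↔
      IsQuasiIsoAt X V W dV dW f x := by
  have hsurj₀ : (∀ w : W 0, dW 0 x w = 0 →
        ∃ v : V 0, dV 0 x v = 0 ∧ ∃ w' : Shift W 0, Shift.d dW 0 x w' = w - f 0 x v) ↔
      ∀ w : W 0, dW 0 x w = 0 → ∃ v : V 0, dV 0 x v = 0 ∧ f 0 x v = w := by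
    have hW₀ : ∀ w v, (∃ w' : Shift W 0, Shift.d dW 0 x w' = w - f 0 x v) ↔ f 0 x v = w :=
      fun w v => ⟨fun ⟨_, h⟩ => (sub_eq_zero.1 h.symm).symm,
        fun h => ⟨PUnit.unit, (sub_eq_zero.2 h.symm).symm⟩⟩
    simp only [hW₀]
  simp only [IsExactEverywhere, IsQuasiIsoAt, MappingCone.injective_zero_iff,
    MappingCone.exact_succ_iff hchain, forall_and]
  constructor
  · rintro ⟨h₁, h₃, hS⟩
    exact ⟨h₁, hsurj₀.1 (hS 0), h₃, fun i => hS (i + 1)⟩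
  · rintro ⟨h₁, h₂, h₃, h₄⟩
    exact ⟨h₁, h₃, Nat.and_forall_add_one.1 ⟨hsurj₀.2 h₂, h₄⟩⟩

end MappingCone

section

variable (X : Type) [TopologicalSpace X] (n : ℕ)
variable (V W : ℕ → Type)
variable [∀ i, NormedAddCommGroup (V i)] [∀ i, NormedSpace ℝ (V i)]
variable [∀ i, NormedAddCommGroup (W i)] [∀ i, NormedSpace ℝ (W i)]

/-- For continuous families (over a topological space `X`) of bounded
cochain complexes of finite-dimensional real normed spaces and of chain maps between
them: (i) exactness at every degree is an open condition on the parameter;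
(ii) being a quasi-isomorphism is an open condition on the parameter. -/
theorem statement15
    [∀ i, FiniteDimensional ℝ (V i)] [∀ i, FiniteDimensional ℝ (W i)]
    (hVbd : ∀ i, n < i → Subsingleton (V i)) (hWbd : ∀ i, n < i → Subsingleton (W i))
    (dV : ∀ i, X → V i →L[ℝ] V (i + 1)) (dW : ∀ i, X → W i →L[ℝ] W (i + 1))
    (f : ∀ i, X → V i →L[ℝ] W i)
    (hdVc : ∀ i, Continuous (dV i)) (hdWc : ∀ i, Continuous (dW i))
    (hfc : ∀ i, Continuous (f i))
    (hVdd : ∀ i x (v : V i), dV (i + 1) x (dV i x v) = 0)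
    (hWdd : ∀ i x (w : W i), dW (i + 1) x (dW i x w) = 0)
    (hchain : ∀ i x (v : V i), dW i x (f i x v) = f (i + 1) x (dV i x v))
    (x₀ : X) :
    (IsExactEverywhere X V dV x₀ →
      ∃ U ∈ nhds x₀, ∀ x ∈ U, IsExactEverywhere X V dV x) ∧
    (IsQuasiIsoAt X V W dV dW f x₀ →
      ∃ U ∈ nhds x₀, ∀ x ∈ U, IsQuasiIsoAt X V W dV dW f x) := by
  refine ⟨fun h => (h.eventually hVbd hdVc hVdd).exists_mem, fun h => ?_⟩
  have hcone := ((MappingCone.isExactEverywhere_iff hchain x₀).2 h).eventually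
    (MappingCone.subsingleton hVbd hWbd) (MappingCone.continuous_d hdVc hdWc hfc)
    (MappingCone.d_d hVdd hWdd hchain)
  exact (hcone.mono fun x hx => (MappingCone.isExactEverywhere_iff hchain x).1 hx).exists_mem

end
end

section
/- Let A be a Lie-Rinehart algebra over R which is free as an R-module with basis e₁,…,e_r, and suppose ∇ : L × A → A is a connection on A for which the basis is flat (∇_X e_i = 0 for all X ∈ L and all i) and whose basic curvature vanishes (R^bas_∇ = 0). Write [e_i,e_j] = Σ_k c^k_{ij}·e_k with c^k_{ij} ∈ R. Then: (i) every derivation annihilates the structure functions, X(c^k_{ij}) = 0 for all X ∈ L and all i,j,k; (ii) if moreover the only elements of R annihilated by all ℝ-linear derivations are the scalar multiples of 1 (as holds for R = C^∞(M) with M connected), then the c^k_{ij} are real constants which are the structure constants of an r-dimensional real Lie algebra g, and the assignment sending the i-th basis vector of g to ρ(e_i) ∈ L is a morphism of Lie algebras, i.e. an action of g by derivations exhibiting A as the action (transformation) Lie-Rinehart algebra R ⊗ g. -/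
/-! For a flat frame `∇_X` acts on coordinates as `X` itself, and the basic curvature of a pair
of frame elements reduces to `∇_X [eᵢ, eⱼ]`; so its vanishing says that every derivation kills
the structure functions `cᵏᵢⱼ`. In particular the anchors `ρ(eₗ)` kill them, so by the Leibniz
rule they pass through brackets like constants, and the Jacobi identity of `A` becomes the Jacobi
identity of the `cᵏᵢⱼ`. When the `cᵏᵢⱼ` are real, these identities descend along the injective
map `ℝ → R` (for `R ≠ 0`), and `ρ` preserving brackets is the action of the Lie algebra. -/

namespace LieRinehart

variable {R : Type} [CommRing R] [Algebra ℝ R] {A : Type} [AddCommGroup A] [Module R A]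
  (LR : LieRinehart R A)

def bracketRight (x : A) : A →+ A :=
  AddMonoidHom.mk' (LR.bracket x) (LR.bracket_add_right x)

theorem bracket_zero (x : A) : LR.bracket x 0 = 0 :=
  map_zero (LR.bracketRight x)

theorem zero_bracket (y : A) : LR.bracket 0 y = 0 := by
  rw [LR.bracket_skew, bracket_zero, neg_zero]

theorem bracket_neg (x y : A) : LR.bracket x (-y) = -LR.bracket x y :=
  map_neg (LR.bracketRight x) y

theorem bracket_sum {ι : Type} (x : A) (s : Finset ι) (f : ι → A) :
    LR.bracket x (∑ k ∈ s, f k) = ∑ k ∈ s, LR.bracket x (f k) :=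
  map_sum (LR.bracketRight x) f s

theorem sum_bracket {ι : Type} (s : Finset ι) (f : ι → A) (z : A) :
    LR.bracket (∑ k ∈ s, f k) z = ∑ k ∈ s, LR.bracket (f k) z := by
  rw [LR.bracket_skew, bracket_sum, ← Finset.sum_neg_distrib]
  exact Finset.sum_congr rfl fun k _ => (LR.bracket_skew (f k) z).symm

theorem bracket_bracket_cyclic (x y z : A) :
    LR.bracket (LR.bracket x y) z + LR.bracket (LR.bracket y z) x
      + LR.bracket (LR.bracket z x) y = 0 := by
  rw [LR.bracket_skew (LR.bracket y z) x, LR.bracket_skew (LR.bracket z x) y,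
    LR.bracket_skew z x, bracket_neg, LR.bracket_jacobi x y z]
  abel

theorem smul_bracket_of_anchor_eq_zero {f : R} {z : A} (hf : LR.anchor z f = 0) (x : A) :
    LR.bracket (f • x) z = f • LR.bracket x z := by
  rw [LR.bracket_skew, LR.bracket_leibniz, hf, zero_smul, add_zero, ← smul_neg,
    ← LR.bracket_skew]

variable {ι : Type} (b : Module.Basis ι R A)

/-- The structure functions `cᵏᵢⱼ` of `A` in the basis `b`: `[eᵢ, eⱼ] = Σₖ cᵏᵢⱼ • eₖ`. -/
noncomputable def structureFun (k i j : ι) : R :=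
  b.repr (LR.bracket (b i) (b j)) k

theorem structureFun_skew (i j k : ι) :
    LR.structureFun b k i j = -LR.structureFun b k j i := by
  simp only [structureFun, LR.bracket_skew (b i) (b j), map_neg, Finsupp.neg_apply]

variable [Fintype ι]

theorem anchor_commutator_eq_sum (i j : ι) (f : R) :
    LR.anchor (b i) (LR.anchor (b j) f) - LR.anchor (b j) (LR.anchor (b i) f)
      = ∑ k, LR.structureFun b k i j • LR.anchor (b k) f := by
  rw [← LR.anchor_bracket, ← b.sum_repr (LR.bracket (b i) (b j)), map_sum,
    ← Derivation.coeFnAddMonoidHom_apply, map_sum, Finset.sum_apply]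
  simp [structureFun]

theorem repr_bracket_bracket
    (hc : ∀ l i j k, LR.anchor (b l) (LR.structureFun b k i j) = 0) (i j l m : ι) :
    b.repr (LR.bracket (LR.bracket (b i) (b j)) (b l)) m
      = ∑ k, LR.structureFun b k i j * LR.structureFun b m k l := by
  have hsmul : ∀ k, LR.bracket (b.repr (LR.bracket (b i) (b j)) k • b k) (b l)
      = LR.structureFun b k i j • LR.bracket (b k) (b l) :=
    fun k => LR.smul_bracket_of_anchor_eq_zero (hc l i j k) (b k)
  conv_lhs => rw [← b.sum_repr (LR.bracket (b i) (b j)), sum_bracket]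
  simp only [hsmul, map_sum, map_smul, Finsupp.coe_finsetSum, Finset.sum_apply,
    Finsupp.smul_apply, smul_eq_mul]
  rfl

theorem structureFun_jacobi
    (hc : ∀ l i j k, LR.anchor (b l) (LR.structureFun b k i j) = 0) (i j l m : ι) :
    ∑ k, (LR.structureFun b m k l * LR.structureFun b k i j
      + LR.structureFun b m k i * LR.structureFun b k j l
      + LR.structureFun b m k j * LR.structureFun b k l i) = 0 := by
  have h := congrArg (fun z => b.repr z m) (LR.bracket_bracket_cyclic (b i) (b j) (b l))
  simp only [map_add, map_zero, Finsupp.add_apply, Finsupp.zero_apply,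
    LR.repr_bracket_bracket b hc, ← Finset.sum_add_distrib] at h
  rw [← h]
  exact Finset.sum_congr rfl fun k _ => by ring

end LieRinehart

namespace LConn

variable {R : Type} [CommRing R] [Algebra ℝ R] {A : Type} [AddCommGroup A] [Module R A]
  (N : LConn R A) {ι : Type} {b : Module.Basis ι R A}

def connRight (X : Derivation ℝ R R) : A →+ A :=
  AddMonoidHom.mk' (N.conn X) (N.conn_add_right X)

theorem conn_sum (X : Derivation ℝ R R) {κ : Type} (s : Finset κ) (f : κ → A) :
    N.conn X (∑ k ∈ s, f k) = ∑ k ∈ s, N.conn X (f k) :=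
  map_sum (N.connRight X) f s

theorem basCurv_basis_of_flat (LR : LieRinehart R A) (hflat : ∀ X i, N.conn X (b i) = 0)
    (X : Derivation ℝ R R) (i j : ι) :
    basCurv LR N (b i) (b j) X = N.conn X (LR.bracket (b i) (b j)) := by
  simp only [basCurv, hflat, LR.zero_bracket, LR.bracket_zero, sub_zero, add_zero]

variable [Fintype ι]

theorem repr_conn_of_flat (hflat : ∀ X i, N.conn X (b i) = 0) (X : Derivation ℝ R R)
    (a : A) (k : ι) : b.repr (N.conn X a) k = X (b.repr a k) := by
  conv_lhs => rw [← b.sum_repr a]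
  simp only [N.conn_sum, N.conn_leibniz, hflat, smul_zero, zero_add,
    b.repr_sum_self]

theorem derivation_structureFun_eq_zero (LR : LieRinehart R A)
    (hflat : ∀ X i, N.conn X (b i) = 0)
    (hbas : ∀ X i j, basCurv LR N (b i) (b j) X = 0) (X : Derivation ℝ R R) (i j k : ι) :
    X (LR.structureFun b k i j) = 0 := by
  rw [LieRinehart.structureFun, ← N.repr_conn_of_flat hflat, ← N.basCurv_basis_of_flat LR hflat,
    hbas, map_zero, Finsupp.zero_apply]

end LConn

theorem exists_real_structureConstants {R : Type} [CommRing R] [Algebra ℝ R]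
    {ι : Type} [Fintype ι] (c : ι → ι → ι → R)
    (hreal : ∀ i j k, ∃ x : ℝ, c k i j = algebraMap ℝ R x)
    (hskew : ∀ i j k, c k i j = -c k j i)
    (hjac : ∀ i j l m, ∑ k, (c m k l * c k i j + c m k i * c k j l + c m k j * c k l i) = 0) :
    ∃ cc : ι → ι → ι → ℝ, (∀ i j k, c k i j = algebraMap ℝ R (cc k i j))
      ∧ (∀ i j k, cc k i j = -cc k j i)
      ∧ (∀ i j l m, ∑ k, (cc m k l * cc k i j + cc m k i * cc k j l
          + cc m k j * cc k l i) = 0) := by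
  rcases subsingleton_or_nontrivial R with _ | _
  · exact ⟨0, fun _ _ _ => Subsingleton.elim _ _, by simp, by simp⟩
  choose cc hcc using fun k i j => hreal i j k
  have hinj : Function.Injective (algebraMap ℝ R) := (algebraMap ℝ R).injective
  refine ⟨cc, fun i j k => hcc k i j, fun i j k => hinj ?_, fun i j l m => hinj ?_⟩
  · simpa only [map_neg, ← hcc] using hskew i j k
  · simpa only [map_sum, map_add, map_mul, map_zero, ← hcc] using hjac i j l m

/-- Let `A` be a Lie-Rinehart algebra over `R`, free with basis
`e₁, …, e_r`, with a connection `∇` for which the basis is flat and whose basic curvature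
vanishes.  Write `[eᵢ, eⱼ] = Σₖ cᵏᵢⱼ • eₖ`.  Then: (i) every derivation annihilates the
structure functions `cᵏᵢⱼ`; (ii) if the only elements of `R` killed by all derivations are
the scalars, then the `cᵏᵢⱼ` are real constants, antisymmetric and satisfying the Jacobi
identity (the structure constants of a real Lie algebra `g`), and `eᵢ ↦ ρ(eᵢ)` defines a
morphism of Lie algebras, i.e. an action of `g` on `R` by derivations. -/
theorem statement17
    {R : Type} [CommRing R] [Algebra ℝ R]
    {A : Type} [AddCommGroup A] [Module R A]
    (LR : LieRinehart R A) (r : ℕ) (b : Module.Basis (Fin r) R A) (N : LConn R A)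
    (hflat : ∀ (X : Derivation ℝ R R) (i : Fin r), N.conn X (b i) = 0)
    (hbas : ∀ (a a' : A) (X : Derivation ℝ R R), basCurv LR N a a' X = 0) :
    -- (i) derivations kill the structure functions
    (∀ (X : Derivation ℝ R R) (i j k : Fin r),
      X (b.repr (LR.bracket (b i) (b j)) k) = 0)
    -- (ii) under the connectedness assumption, the structure functions are the structure
    -- constants of a real Lie algebra acting on `R` by derivations via the anchor
    ∧ ((∀ f : R, (∀ X : Derivation ℝ R R, X f = 0) → ∃ c : ℝ, f = algebraMap ℝ R c) →
        ∃ cc : Fin r → Fin r → Fin r → ℝ,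
          (∀ i j k : Fin r,
            b.repr (LR.bracket (b i) (b j)) k = algebraMap ℝ R (cc k i j))
          ∧ (∀ i j k : Fin r, cc k i j = - cc k j i)
          ∧ (∀ i j l m : Fin r,
              ∑ k : Fin r, (cc m k l * cc k i j + cc m k i * cc k j l
                + cc m k j * cc k l i) = 0)
          ∧ (∀ (i j : Fin r) (f : R),
              ∑ k : Fin r, algebraMap ℝ R (cc k i j) • LR.anchor (b k) f
                = LR.anchor (b i) (LR.anchor (b j) f)
                  - LR.anchor (b j) (LR.anchor (b i) f))) := by
  have hc := N.derivation_structureFun_eq_zero LR hflat fun X i j => hbas (b i) (b j) X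
  refine ⟨hc, fun hconst => ?_⟩
  obtain ⟨cc, hcc, hskew, hjac⟩ := exists_real_structureConstants (LR.structureFun b)
    (fun i j k => hconst _ (hc · i j k)) (LR.structureFun_skew b)
    (LR.structureFun_jacobi b fun l => hc (LR.anchor (b l)))
  refine ⟨cc, hcc, hskew, hjac, fun i j f => ?_⟩
  rw [LR.anchor_commutator_eq_sum]
  simp only [hcc]
end
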